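/- Let $G$ be a finite abelian group whose $p$-primary component is cyclic, equipped with an action of a group $\Gamma$. If the induced $\Gamma$-module $G/pG$ is either trivial (as a group) or has no nonzero fixed points, then $p \nmid |G^\Gamma|$, and conversely if $p \mid |G^\Gamma|$ then $(G/pG)^\Gamma \neq 0$. -/
import Mathlib


/-- Let `G` be a finite abelian group whose `p`-primary component (equivalently, its `p`-Sylow
subgroup) is cyclic, equipped with an action of a group `Γ` by automorphisms.  Writing `G`
multiplicatively, `pG` corresponds to the subgroup `Gᵖ` of `p`-th powers.  If the induced
`Γ`-module `G/Gᵖ` is trivial or has no nonzero fixed points (i.e. every element fixed modulo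
`Gᵖ` lies in `Gᵖ`), then `p` does not divide the order of the fixed subgroup `G^Γ`; conversely
if `p` divides the order of `G^Γ` then `(G/Gᵖ)^Γ ≠ 0` (i.e. there is an element fixed modulo
`Gᵖ` which does not lie in `Gᵖ`). -/
theorem stmt0 {G Γ : Type*} [CommGroup G] [Finite G] [Group Γ] [MulDistribMulAction Γ G]
    (p : ℕ) [Fact p.Prime] (hcyc : ∀ P : Sylow p G, IsCyclic (P : Subgroup G)) :
    ((∀ x : G, (∀ γ : Γ, γ • x / x ∈ (powMonoidHom p : G →* G).range) →
        x ∈ (powMonoidHom p : G →* G).range) →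
      ¬ p ∣ Nat.card {x : G // ∀ γ : Γ, γ • x = x}) ∧
    (p ∣ Nat.card {x : G // ∀ γ : Γ, γ • x = x} →
      ∃ x : G, x ∉ (powMonoidHom p : G →* G).range ∧
        ∀ γ : Γ, γ • x / x ∈ (powMonoidHom p : G →* G).range) := by
  have hp := Fact.out (p := p.Prime)
  have main : p ∣ Nat.card {x : G // ∀ γ : Γ, γ • x = x} →
      ∃ x : G, x ∉ (powMonoidHom p : G →* G).range ∧
        ∀ γ : Γ, γ • x / x ∈ (powMonoidHom p : G →* G).range := by
    intro hdvd
    -- the fixed subgroup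
    let S : Subgroup G :=
      { carrier := {x | ∀ γ : Γ, γ • x = x}
        mul_mem' := fun {a b} ha hb γ => by rw [smul_mul', ha γ, hb γ]
        one_mem' := fun γ => smul_one γ
        inv_mem' := fun {a} ha γ => by rw [smul_inv', ha γ] }
    have hcardS : Nat.card {x : G // ∀ γ : Γ, γ • x = x} = Nat.card S := rfl
    rw [hcardS] at hdvd
    obtain ⟨y, hy⟩ := exists_prime_orderOf_dvd_card' (G := S) p hdvd
    have hpG : p ∣ Nat.card G := hdvd.trans S.card_subgroup_dvd_card
    have hG0 : Nat.card G ≠ 0 := Nat.card_pos.ne'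
    obtain ⟨P⟩ : Nonempty (Sylow p G) := inferInstance
    haveI : Unique (Sylow p G) := Sylow.unique_of_normal P inferInstance
    set n := (Nat.card G).factorization p with hn
    have hcardP : Nat.card (P : Subgroup G) = p ^ n := P.card_eq_multiplicity
    have hnot : ¬ p ^ (n + 1) ∣ Nat.card G :=
      Nat.pow_succ_factorization_not_dvd hG0 hp
    obtain ⟨n', hn'⟩ : ∃ n', n = n' + 1 :=
      ⟨n - 1, (Nat.succ_pred_eq_of_pos (hp.factorization_pos_of_dvd hG0 hpG)).symm⟩
    rw [hn'] at hcardP hnot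
    -- any element of p-power order lies in P
    have memP : ∀ x : G, (∃ k : ℕ, orderOf x = p ^ k) → x ∈ (P : Subgroup G) := by
      rintro x ⟨k, hk⟩
      have hx : IsPGroup p (Subgroup.zpowers x) :=
        IsPGroup.of_card (by rw [Nat.card_zpowers, hk])
      obtain ⟨Q, hQ⟩ := hx.exists_le_sylow
      have hQP : Q = P := Subsingleton.elim Q P
      exact hQP ▸ hQ (Subgroup.mem_zpowers x)
    -- a generator of P
    obtain ⟨g, hg⟩ := (hcyc P).exists_generator
    set g0 : G := (g : G) with hg0
    have hordg : orderOf g0 = p ^ (n' + 1) := by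
      have h1 : orderOf g = Nat.card (P : Subgroup G) :=
        orderOf_eq_card_of_forall_mem_zpowers hg
      have h2 : orderOf g0 = orderOf g :=
        orderOf_injective (P : Subgroup G).subtype Subtype.coe_injective g
      rw [h2, h1, hcardP]
    have hzp : ∀ x : G, x ∈ (P : Subgroup G) → ∃ m : ℤ, g0 ^ m = x := by
      intro x hx
      obtain ⟨m, hm⟩ := hg ⟨x, hx⟩
      obtain ⟨m, rfl⟩ := hm
      exact ⟨m, by rw [hg0, ← SubgroupClass.coe_zpow]⟩
    -- the fixed element of order p
    set y0 : G := (y : G) with hy0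
    have hordy : orderOf y0 = p :=
      (orderOf_injective S.subtype Subtype.coe_injective y).trans hy
    have hyfix : ∀ γ : Γ, γ • y0 = y0 := y.2
    obtain ⟨m, hm⟩ := hzp y0 (memP y0 ⟨1, by rw [hordy, pow_one]⟩)
    -- integer facts about m
    have hpn1 : ((p : ℤ) ^ (n' + 1)) ∣ m * (p : ℤ) := by
      have h1 : g0 ^ (m * (p : ℤ)) = 1 := by
        rw [zpow_mul, hm, zpow_natCast, ← hordy, pow_orderOf_eq_one]
      have h2 := orderOf_dvd_iff_zpow_eq_one.mpr h1
      rwa [hordg, Nat.cast_pow] at h2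
    have hpn2 : ¬ ((p : ℤ) ^ (n' + 1)) ∣ m := by
      intro h
      have h1 : g0 ^ m = 1 := by
        rw [← orderOf_dvd_iff_zpow_eq_one, hordg, Nat.cast_pow]
        exact h
      rw [hm] at h1
      rw [h1, orderOf_one] at hordy
      exact hp.one_lt.ne' hordy.symm
    have hpz : (p : ℤ) ≠ 0 := by exact_mod_cast hp.ne_zero
    obtain ⟨t, ht⟩ : ((p : ℤ) ^ n') ∣ m := by
      have h1 : (p : ℤ) ^ n' * (p : ℤ) ∣ m * (p : ℤ) := by
        rwa [← pow_succ]
      exact (mul_dvd_mul_iff_right hpz).mp h1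
    have hpt : ¬ (p : ℤ) ∣ t := by
      intro h
      obtain ⟨u, hu⟩ := h
      exact hpn2 ⟨u, by rw [ht, hu, pow_succ]; ring⟩
    -- the key congruence: the action on g0 is by raising to a power ≡ 1 mod p
    have key : ∀ γ : Γ, ∃ j : ℤ, γ • g0 = g0 ^ ((p : ℤ) * j + 1) := by
      intro γ
      set e := MulDistribMulAction.toMulEquiv G γ with he
      have hge : γ • g0 = e g0 := rfl
      have horde : orderOf (e g0) = p ^ (n' + 1) := by
        exact (orderOf_injective e.toMonoidHom e.injective g0).trans hordg
      obtain ⟨k, hk⟩ := hzp (e g0) (memP _ ⟨n' + 1, horde⟩)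
      have h2 : g0 ^ (k * m) = g0 ^ m := by
        calc g0 ^ (k * m) = (g0 ^ k) ^ m := by rw [zpow_mul]
          _ = (e g0) ^ m := by rw [hk]
          _ = e (g0 ^ m) := (map_zpow e g0 m).symm
          _ = y0 := by rw [hm]; exact hyfix γ
          _ = g0 ^ m := hm.symm
      have h3 : ((p : ℤ) ^ (n' + 1)) ∣ (k - 1) * m := by
        have h4 : g0 ^ ((k - 1) * m) = 1 := by
          rw [sub_one_mul, zpow_sub, h2]; simp
        have h5 := orderOf_dvd_iff_zpow_eq_one.mpr h4
        rwa [hordg, Nat.cast_pow] at h5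
      have h6 : (p : ℤ) ∣ (k - 1) * t := by
        have h7 : (p : ℤ) ^ n' * ((p : ℤ) * 1) ∣ (p : ℤ) ^ n' * ((k - 1) * t) := by
          have : (p : ℤ) ^ n' * ((k - 1) * t) = (k - 1) * m := by rw [ht]; ring
          rw [this, mul_one, ← pow_succ]
          exact h3
        have h8 := (mul_dvd_mul_iff_left (pow_ne_zero n' hpz)).mp h7
        rwa [mul_one] at h8
      have h9 : (p : ℤ) ∣ (k - 1) :=
        ((Int.Prime.dvd_mul' (by exact_mod_cast hp) h6).resolve_right hpt)
      obtain ⟨j, hj⟩ := h9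
      exact ⟨j, by rw [hge, ← hk, show k = (p:ℤ)*j+1 from by linarith]⟩
    refine ⟨g0, ?_, ?_⟩
    · rintro ⟨a, ha⟩
      have ha' : a ^ p = g0 := ha
      have hd : orderOf a ∣ Nat.card G := orderOf_dvd_natCard a
      have h1 : orderOf (a ^ p) = p ^ (n' + 1) := by rw [ha', hordg]
      have h2 : p ^ (n' + 1) ∣ orderOf a := by
        rw [← h1]; exact orderOf_pow_dvd p
      have hgcd : Nat.gcd (orderOf a) p = p :=
        Nat.gcd_eq_right ((dvd_pow_self p (Nat.succ_ne_zero n')).trans h2)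
      have h3 : orderOf a / p = p ^ (n' + 1) := by
        rw [← h1, orderOf_pow, hgcd]
      have h4 : orderOf a = p ^ (n' + 2) := by
        have hpd : p ∣ orderOf a := (dvd_pow_self p (Nat.succ_ne_zero n')).trans h2
        obtain ⟨c, hc⟩ := hpd
        rw [hc, Nat.mul_div_cancel_left c hp.pos] at h3
        rw [hc, h3, pow_succ, pow_succ]; ring
      exact hnot (by
        calc p ^ (n' + 1 + 1) = p ^ (n' + 2) := by ring_nf
          _ ∣ Nat.card G := h4 ▸ hd)
    · intro γ
      obtain ⟨j, hj⟩ := key γ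
      refine ⟨g0 ^ j, ?_⟩
      show (g0 ^ j) ^ p = γ • g0 / g0
      rw [hj, zpow_add, zpow_one, mul_div_assoc, div_self', mul_one,
        ← zpow_natCast (g0 ^ j) p, ← zpow_mul, mul_comm j (p : ℤ)]
  refine ⟨fun h hdvd => ?_, main⟩
  obtain ⟨x, hx1, hx2⟩ := main hdvd
  exact hx1 (h x hx2)
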